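/- Let T be the 2×2 integer matrix with entries T₁₁ = −3, T₁₂ = −1, T₂₁ = 0, T₂₂ = 3, and let D = { (0,0)ᵀ, (2,1)ᵀ, (−1,1)ᵀ, (1,3)ᵀ, (2,0)ᵀ, (2,2)ᵀ, (−2,2)ᵀ, (−1,3)ᵀ } ⊂ ℤ². Then the attractor F(T,D) is connected. -/

import Mathlib

/-!
Write `f_d x = T⁻¹ (x + d)`; each `f_d` is a `4/9`-contraction for the sup norm. Hata's criterion:
if the graph on the digits joining `d, d'` whenever `f_d F ∩ f_{d'} F ≠ ∅` is connected, then `F`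
is connected. Indeed, iterating the Hutchinson operator `S ↦ ⋃ f_d S` on a closed ball containing
`F` produces connected sets containing `F` which lie in arbitrarily thin neighbourhoods of `F`,
and a compact set with this property is connected. For the given digits the graph contains a
Hamiltonian path; its edges are witnessed by explicit points of `F`, namely fixed points of
compositions `f_a ∘ f_b`.
-/

open Matrix

def castVec {k : ℕ} (d : Fin k → ℤ) : Fin k → ℝ := fun i => (d i : ℝ)

open Function Metric Relation Set
open scoped NNReal

theorem ContractingWith.mem_of_isFixedPt {X : Type*} [MetricSpace X] [CompleteSpace X]
    {K : ℝ≥0} {f : X → X} (hf : ContractingWith K f) {F : Set X} (hF : IsClosed F)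
    (hne : F.Nonempty) (hmaps : MapsTo f F F) {p : X} (hp : IsFixedPt f p) : p ∈ F := by
  have : Nonempty X := ⟨p⟩
  obtain ⟨x, hx⟩ := hne
  rw [hf.fixedPoint_unique hp]
  exact hF.mem_of_tendsto (hf.tendsto_iterate_fixedPoint x)
    (Filter.Eventually.of_forall fun n => hmaps.iterate n hx)

theorem IsCompact.isPreconnected_of_forall_isOpen {X : Type*} [TopologicalSpace X] [T2Space X]
    {F : Set X} (hF : IsCompact F)
    (h : ∀ W, IsOpen W → F ⊆ W → ∃ C, IsPreconnected C ∧ F ⊆ C ∧ C ⊆ W) :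
    IsPreconnected F := by
  refine (isPreconnected_iff_subset_of_fully_disjoint_closed hF.isClosed).2
    fun u v hu hv hFuv huv => ?_
  obtain ⟨U, V, hU, hV, huU, hvV, hUV⟩ := SeparatedNhds.of_isCompact_isCompact
    (hF.inter_right hu) (hF.inter_right hv) (huv.mono inf_le_right inf_le_right)
  have hFUV : F ⊆ U ∪ V := fun x hx =>
    (hFuv hx).imp (fun hxu => huU ⟨hx, hxu⟩) fun hxv => hvV ⟨hx, hxv⟩
  obtain ⟨C, hC, hFC, hCUV⟩ := h _ (hU.union hV) hFUV
  refine (hC.subset_or_subset hU hV hUV hCUV).imp (fun hCU => ?_) fun hCV => ?_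
  · exact fun x hx => (hFuv hx).resolve_right fun hxv =>
      hUV.le_bot ⟨hCU (hFC hx), hvV ⟨hx, hxv⟩⟩
  · exact fun x hx => (hFuv hx).resolve_left fun hxu =>
      hUV.le_bot ⟨huU ⟨hx, hxu⟩, hCV (hFC hx)⟩

def hutchinson {ι X : Type*} (f : ι → X → X) (S : Set X) : Set X := ⋃ i, f i '' S

section Hutchinson

variable {ι X : Type*} {f : ι → X → X}

theorem hutchinson_mono {S T : Set X} (h : S ⊆ T) : hutchinson f S ⊆ hutchinson f T :=
  iUnion_mono fun _ => image_mono h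

theorem mapsTo_of_hutchinson_eq {F : Set X} (hF : hutchinson f F = F) (i : ι) :
    MapsTo (f i) F F :=
  fun _ hx => hF ▸ mem_iUnion_of_mem i (mem_image_of_mem _ hx)

theorem subset_iterate_hutchinson {F S : Set X} (hF : hutchinson f F = F) (hFS : F ⊆ S)
    (n : ℕ) : F ⊆ (hutchinson f)^[n] S := by
  induction n with
  | zero => exact hFS
  | succ n ih =>
    rw [iterate_succ_apply']
    exact hF ▸ hutchinson_mono ih

theorem isPreconnected_hutchinson [TopologicalSpace X] (hf : ∀ i, Continuous (f i))
    {F S : Set X} (hchain : ∀ i j, ReflTransGen (fun i j => (f i '' F ∩ f j '' F).Nonempty) i j)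
    (hFS : F ⊆ S) (hS : IsPreconnected S) : IsPreconnected (hutchinson f S) :=
  IsPreconnected.iUnion_of_reflTransGen (fun i => hS.image _ (hf i).continuousOn)
    fun i j => ReflTransGen.mono (fun _ _ h =>
      h.mono (inter_subset_inter (image_mono hFS) (image_mono hFS))) _ _ (hchain i j)

theorem isPreconnected_iterate_hutchinson [TopologicalSpace X] (hf : ∀ i, Continuous (f i))
    {F S : Set X} (hchain : ∀ i j, ReflTransGen (fun i j => (f i '' F ∩ f j '' F).Nonempty) i j)
    (hF : hutchinson f F = F) (hFS : F ⊆ S) (hS : IsPreconnected S) (n : ℕ) :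
    IsPreconnected ((hutchinson f)^[n] S) := by
  induction n with
  | zero => exact hS
  | succ n ih =>
    rw [iterate_succ_apply']
    exact isPreconnected_hutchinson hf hchain (subset_iterate_hutchinson hF hFS n) ih

theorem infDist_le_of_mem_hutchinson [MetricSpace X] {K : ℝ≥0} (hf : ∀ i, LipschitzWith K (f i))
    {F S : Set X} (hF : hutchinson f F = F) (hcpt : IsCompact F) (hne : F.Nonempty) {r : ℝ}
    (hS : ∀ y ∈ S, infDist y F ≤ r) : ∀ x ∈ hutchinson f S, infDist x F ≤ K * r := by
  simp only [hutchinson, mem_iUnion, mem_image]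
  rintro _ ⟨i, y, hy, rfl⟩
  obtain ⟨z, hz, hyz⟩ := hcpt.exists_infDist_eq_dist hne y
  calc infDist (f i y) F
      ≤ dist (f i y) (f i z) := infDist_le_dist_of_mem (mapsTo_of_hutchinson_eq hF i hz)
    _ ≤ K * dist y z := (hf i).dist_le_mul y z
    _ ≤ K * r := by gcongr; exact hyz ▸ hS y hy

theorem infDist_le_of_mem_iterate_hutchinson [MetricSpace X] {K : ℝ≥0}
    (hf : ∀ i, LipschitzWith K (f i)) {F S : Set X} (hF : hutchinson f F = F)
    (hcpt : IsCompact F) (hne : F.Nonempty) {r : ℝ} (hS : ∀ y ∈ S, infDist y F ≤ r) (n : ℕ) :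
    ∀ x ∈ (hutchinson f)^[n] S, infDist x F ≤ K ^ n * r := by
  induction n with
  | zero => simpa using hS
  | succ n ih =>
    rw [iterate_succ_apply', pow_succ', mul_assoc]
    exact infDist_le_of_mem_hutchinson hf hF hcpt hne ih

end Hutchinson

theorem isConnected_of_hutchinson_eq {E ι : Type*} [NormedAddCommGroup E] [NormedSpace ℝ E]
    {f : ι → E → E} {K : ℝ≥0} (hK : K < 1) (hf : ∀ i, LipschitzWith K (f i)) {F : Set E}
    (hne : F.Nonempty) (hcpt : IsCompact F) (hF : hutchinson f F = F)
    (hchain : ∀ i j, ReflTransGen (fun i j => (f i '' F ∩ f j '' F).Nonempty) i j) :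
    IsConnected F := by
  refine ⟨hne, hcpt.isPreconnected_of_forall_isOpen fun W hW hFW => ?_⟩
  obtain ⟨δ, hδ, hδW⟩ := hcpt.exists_thickening_subset_open hW hFW
  obtain ⟨R, hFR⟩ := hcpt.isBounded.subset_closedBall (0 : E)
  set C := closedBall (0 : E) R
  have hC : ∀ y ∈ C, infDist y F ≤ diam C := fun y hy =>
    (infDist_le_dist_of_mem hne.some_mem).trans
      (dist_le_diam_of_mem isBounded_closedBall hy (hFR hne.some_mem))
  have hsmall : ∀ᶠ n in Filter.atTop, (K : ℝ) ^ n * diam C < δ := by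
    have := (tendsto_pow_atTop_nhds_zero_of_lt_one K.coe_nonneg hK).mul_const (diam C)
    rw [zero_mul] at this
    exact this.eventually (gt_mem_nhds hδ)
  obtain ⟨n, hn⟩ := hsmall.exists
  refine ⟨(hutchinson f)^[n] C, ?_, subset_iterate_hutchinson hF hFR n, fun x hx => hδW ?_⟩
  · exact isPreconnected_iterate_hutchinson (fun i => (hf i).continuous) hchain hF hFR
      (convex_closedBall 0 R).isPreconnected n
  · rw [mem_thickening_iff_infDist_lt hne]
    exact (infDist_le_of_mem_iterate_hutchinson hf hF hcpt hne hC n x hx).trans_lt hn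

noncomputable def digitMap (d : Fin 2 → ℤ) (x : Fin 2 → ℝ) : Fin 2 → ℝ :=
  ![-(x 0 + d 0) / 3 - (x 1 + d 1) / 9, (x 1 + d 1) / 3]

theorem inv_mulVec_add_castVec (d : Fin 2 → ℤ) (x : Fin 2 → ℝ) :
    (!![(-3 : ℝ), -1; 0, 3])⁻¹ *ᵥ (x + castVec d) = digitMap d x := by
  have hinv : (!![(-3 : ℝ), -1; 0, 3])⁻¹ = !![-1/3, -1/9; 0, 1/3] := by
    refine inv_eq_right_inv ?_
    ext i j
    fin_cases i <;> fin_cases j <;> norm_num [Matrix.mul_apply, Fin.sum_univ_two]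
  rw [hinv]
  ext i
  fin_cases i <;> simp [digitMap, castVec, mulVec, dotProduct, Fin.sum_univ_two] <;> ring

theorem lipschitzWith_digitMap (d : Fin 2 → ℤ) : LipschitzWith (4/9) (digitMap d) := by
  refine LipschitzWith.of_dist_le_mul fun x y => ?_
  have h0 := abs_le.1 ((Real.dist_eq _ _).symm.trans_le (dist_le_pi_dist x y 0))
  have h1 := abs_le.1 ((Real.dist_eq _ _).symm.trans_le (dist_le_pi_dist x y 1))
  refine (dist_pi_le_iff (by positivity)).2 fun i => ?_
  fin_cases i <;> simp [digitMap, Real.dist_eq, abs_le] <;> constructor <;> linarith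

-- Listed along a path in the intersection graph: consecutive pieces meet.
def digits : Fin 8 → Fin 2 → ℤ :=
  ![![2, 0], ![0, 0], ![-1, 1], ![-2, 2], ![-1, 3], ![1, 3], ![2, 2], ![2, 1]]

theorem hutchinson_digitMap_digits (S : Set (Fin 2 → ℝ)) :
    hutchinson (fun i => digitMap (digits i)) S =
      ⋃ d ∈ ({![0, 0], ![2, 1], ![-1, 1], ![1, 3], ![2, 0], ![2, 2], ![-2, 2], ![-1, 3]} :
        Finset (Fin 2 → ℤ)), (fun x => (!![(-3 : ℝ), -1; 0, 3])⁻¹ *ᵥ (x + castVec d)) '' S := by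
  have hD : Finset.univ.image digits =
      {![0, 0], ![2, 1], ![-1, 1], ![1, 3], ![2, 0], ![2, 2], ![-2, 2], ![-1, 3]} := by
    decide
  simp_rw [← hD, Finset.set_biUnion_finset_image, Finset.mem_univ, iUnion_true,
    inv_mulVec_add_castVec, hutchinson]

theorem reflTransGen_digitMap_inter_nonempty {F : Set (Fin 2 → ℝ)} (hF : IsClosed F)
    (hne : F.Nonempty) (hinv : hutchinson (fun i => digitMap (digits i)) F = F) (i j : Fin 8) :
    ReflTransGen (fun i j => (digitMap (digits i) '' F ∩ digitMap (digits j) '' F).Nonempty)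
      i j := by
  have mem_of_cycle : ∀ a b p, digitMap (digits a) (digitMap (digits b) p) = p → p ∈ F :=
    fun a b p hp => ContractingWith.mem_of_isFixedPt (K := 4/9 * (4/9))
      ⟨by norm_num, (lipschitzWith_digitMap _).comp (lipschitzWith_digitMap _)⟩ hF hne
      ((mapsTo_of_hutchinson_eq hinv a).comp (mapsTo_of_hutchinson_eq hinv b)) hp
  have meet : ∀ {a b p q}, p ∈ F → q ∈ F → digitMap (digits a) p = digitMap (digits b) q →
      (digitMap (digits a) '' F ∩ digitMap (digits b) '' F).Nonempty :=
    fun hp hq h => ⟨_, mem_image_of_mem _ hp, h ▸ mem_image_of_mem _ hq⟩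
  have hP1 : ![-5/4, 1] ∈ F := mem_of_cycle 6 3 _ (by simp [digitMap, digits]; norm_num)
  have hP2 : ![3/4, 1] ∈ F := mem_of_cycle 3 6 _ (by simp [digitMap, digits]; norm_num)
  have hP3 : ![-3/4, 9/8] ∈ F := mem_of_cycle 5 1 _ (by simp [digitMap, digits]; norm_num)
  have hP4 : ![1/4, 1/8] ∈ F := mem_of_cycle 1 7 _ (by simp [digitMap, digits]; norm_num)
  have hP5 : ![1/4, 1] ∈ F := mem_of_cycle 3 3 _ (by simp [digitMap, digits]; norm_num)
  have hP6 : ![-3/4, 0] ∈ F := mem_of_cycle 0 1 _ (by simp [digitMap, digits]; norm_num)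
  have hP7 : ![-5/8, 1/2] ∈ F := mem_of_cycle 7 7 _ (by simp [digitMap, digits]; norm_num)
  have hP8 : ![-5/8, 3/2] ∈ F := mem_of_cycle 5 5 _ (by simp [digitMap, digits]; norm_num)
  have hsucc : ∀ k : Fin 8,
      (digitMap (digits k) '' F ∩ digitMap (digits (Order.succ k)) '' F).Nonempty := by
    intro k
    -- `b` is named explicitly because `simp` does not evaluate `Order.succ` on `Fin 8`;
    -- in the last case `Order.succ 7 = 7`.
    fin_cases k
    · exact meet (b := 1) hP1 hP2 (by simp [digitMap, digits]; norm_num)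
    · exact meet (b := 2) hP3 hP4 (by simp [digitMap, digits]; norm_num)
    · exact meet (b := 3) hP3 hP4 (by simp [digitMap, digits]; norm_num)
    · exact meet (b := 4) hP5 hP6 (by simp [digitMap, digits]; norm_num)
    · exact meet (b := 5) hP2 hP1 (by simp [digitMap, digits]; norm_num)
    · exact meet (b := 6) hP4 hP3 (by simp [digitMap, digits]; norm_num)
    · exact meet (b := 7) hP7 hP8 (by simp [digitMap, digits]; norm_num)
    · exact meet (b := 7) hP7 hP7 rfl
  exact reflTransGen_of_succ _ (fun k _ => hsucc k) fun k _ => inter_comm _ _ ▸ hsucc k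

/-- For `T = [[-3,-1],[0,3]]` and
`D = {(0,0)ᵀ, (2,1)ᵀ, (-1,1)ᵀ, (1,3)ᵀ, (2,0)ᵀ, (2,2)ᵀ, (-2,2)ᵀ, (-1,3)ᵀ}`, the attractor
`F(T,D)` (the unique nonempty compact set with `F = ⋃_{d ∈ D} T⁻¹(F + d)`) is
connected. -/
theorem stmt14
    (D : Finset (Fin 2 → ℤ))
    (hD : D = {![0, 0], ![2, 1], ![-1, 1], ![1, 3], ![2, 0], ![2, 2], ![-2, 2],
      ![-1, 3]})
    (F : Set (Fin 2 → ℝ)) (hne : F.Nonempty) (hcpt : IsCompact F)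
    (hfix : F = ⋃ d ∈ D,
      (fun x => (!![(-3 : ℝ), -1; 0, 3])⁻¹ *ᵥ (x + castVec d)) '' F) :
    IsConnected F := by
  subst hD
  have hF : hutchinson (fun i => digitMap (digits i)) F = F :=
    (hutchinson_digitMap_digits F).trans hfix.symm
  exact isConnected_of_hutchinson_eq (K := 4/9) (by norm_num) (fun _ => lipschitzWith_digitMap _)
    hne hcpt hF (reflTransGen_digitMap_inter_nonempty hcpt.isClosed hne hF)
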